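/- Let d be odd and let ψ be a state vector on (ZMod d)^n with everywhere nonnegative Wigner function. Then |ψ| is constant on the support of ψ: for any two points x, q with ψ(x) ≠ 0 and ψ(q) ≠ 0, |ψ(x)| = |ψ(q)|. -/

import Mathlib

open scoped BigOperators
open Finset Matrix
open scoped ComplexOrder

attribute [instance] Classical.propDecidable

/-- The character `χ(t) = exp(2πit/d)` on `ZMod d`. -/
noncomputable def chi (d : ℕ) (t : ZMod d) : ℂ :=
  Complex.exp (2 * Real.pi * Complex.I * (t.val : ℂ) / (d : ℂ))

/-- The standard symplectic form on `(Fin n → R) × (Fin n → R)`. -/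
def symp (R : Type) [CommRing R] (n : ℕ) (v w : (Fin n → R) × (Fin n → R)) : R :=
  (∑ i, v.1 i * w.2 i) - ∑ i, v.2 i * w.1 i

/-- Single-particle Weyl operator `w(p,q) = χ(-2⁻¹pq) ẑ(p) x̂(q)` on `ℂ^d`. -/
noncomputable def weyl1 (d : ℕ) (p q : ZMod d) : Matrix (ZMod d) (ZMod d) ℂ :=
  Matrix.of fun x y => chi d (-(2⁻¹ : ZMod d) * p * q + p * x) * (if y = x - q then 1 else 0)

/-- Multi-particle Weyl operator on `(ℂ^d)^{⊗n}` in coordinates. -/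
noncomputable def weyl (d n : ℕ) (p q : Fin n → ZMod d) :
    Matrix (Fin n → ZMod d) (Fin n → ZMod d) ℂ :=
  Matrix.of fun x y =>
    chi d (-(2⁻¹ : ZMod d) * (∑ i, p i * q i) + ∑ i, p i * x i) * (if y = x - q then 1 else 0)

/-- Weyl operator indexed by a phase space point. -/
noncomputable def weylV (d n : ℕ) (v : (Fin n → ZMod d) × (Fin n → ZMod d)) :
    Matrix (Fin n → ZMod d) (Fin n → ZMod d) ℂ :=
  weyl d n v.1 v.2

/-- Action of the Weyl operator on wave functions:
`(w(p,q)ψ)(y) = χ(-2⁻¹pq + py) ψ(y-q)`. -/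
noncomputable def weylAct (d n : ℕ) (p q : Fin n → ZMod d) (ψ : (Fin n → ZMod d) → ℂ) :
    (Fin n → ZMod d) → ℂ :=
  fun y => chi d (-(2⁻¹ : ZMod d) * (∑ i, p i * q i) + ∑ i, p i * y i) * ψ (y - q)

/-- Wigner function of a pure state `ψ`. -/
noncomputable def wignerPure (d n : ℕ) [NeZero d] (ψ : (Fin n → ZMod d) → ℂ)
    (p q : Fin n → ZMod d) : ℂ :=
  ((d : ℂ) ^ n)⁻¹ * ∑ ξ : Fin n → ZMod d, chi d (-(∑ i, ξ i * p i)) *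
    (starRingEnd ℂ) (ψ (q - (2⁻¹ : ZMod d) • ξ)) * ψ (q + (2⁻¹ : ZMod d) • ξ)

/-!
Fourier inversion in the momentum variable gives `∑ₚ χ(a·p) W(p,q) = conj ψ(q - a/2) ψ(q + a/2)`.
When `W ≥ 0` the triangle inequality turns this into `|ψ(m-h)| |ψ(m+h)| ≤ ∑ₚ W(p,m) = |ψ(m)|²`:
`|ψ|` is midpoint log-concave. On a finite group of odd order such a function is constant on its
support. Let `t` be a maximum point and `u` a point of the support; the points `t + 2⁻ᵏ(u - t)` come
back to `u` after `K ≥ 1` halvings, and `rₖ = |ψ(t + 2⁻ᵏ(u - t))| / |ψ(t)|` satisfies `rₖ ≤ rₖ₊₁²`,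
so `r₀ ≤ r₀ ^ 2 ^ K` with `0 < r₀ ≤ 1`, which forces `r₀ = 1`.
-/
section MidpointLogConcave

lemma le_pow_two_pow_of_le_sq {r : ℕ → ℝ} (hr0 : ∀ k, 0 ≤ r k)
    (hr : ∀ k, r k ≤ r (k + 1) ^ 2) (k : ℕ) : r 0 ≤ r k ^ 2 ^ k := by
  induction k with
  | zero => simp
  | succ k ih =>
    calc r 0 ≤ r k ^ 2 ^ k := ih
      _ ≤ (r (k + 1) ^ 2) ^ 2 ^ k := by gcongr; exacts [hr0 k, hr k]
      _ = r (k + 1) ^ 2 ^ (k + 1) := by rw [← pow_mul, pow_succ']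

variable {G : Type*} [AddCommGroup G] [Finite G] {f : G → ℝ}

lemma eq_of_forall_le_of_mul_le_sq (hG : (Nat.card G).Coprime 2) (hf0 : ∀ x, 0 ≤ f x)
    (hf : ∀ m h, f (m - h) * f (m + h) ≤ f m ^ 2) {t u : G} (ht : ∀ x, f x ≤ f t)
    (hu : f u ≠ 0) : f u = f t := by
  set σ : Equiv.Perm G := (nsmulCoprime hG).symm
  have hhalf : ∀ w, σ w + σ w = w := fun w => by
    have := (nsmulCoprime hG).apply_symm_apply w
    rwa [nsmulCoprime_apply, two_nsmul] at this
  have hM : 0 < f t := ((hf0 u).lt_of_ne' hu).trans_le (ht u)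
  set v : ℕ → G := fun k => t + (σ ^ k) (u - t)
  have hv : ∀ k, f t * f (v k) ≤ f (v (k + 1)) ^ 2 := fun k => by
    have hmid := hf (v (k + 1)) ((σ ^ (k + 1)) (u - t))
    have hpow : (σ ^ (k + 1)) (u - t) = σ ((σ ^ k) (u - t)) := by
      rw [pow_succ', Equiv.Perm.mul_apply]
    simpa only [v, hpow, add_sub_cancel_right, add_assoc, hhalf] using hmid
  set K := orderOf σ
  have hK : 0 < K := orderOf_pos σ
  have hvK : v K = u := by simp [v, K, pow_orderOf_eq_one]
  have hr : ∀ k, f (v k) / f t ≤ (f (v (k + 1)) / f t) ^ 2 := fun k => by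
    rw [div_pow, le_div_iff₀ (by positivity), sq, ← mul_assoc, div_mul_cancel₀ _ hM.ne', mul_comm]
    exact hv k
  have hcycle := le_pow_two_pow_of_le_sq (fun k => div_nonneg (hf0 _) hM.le) hr K
  simp only [hvK, v, pow_zero, Equiv.Perm.one_apply, add_sub_cancel] at hcycle
  by_contra hne
  have hlt : f u / f t < 1 := (div_lt_one hM).2 ((ht u).lt_of_ne hne)
  have := pow_lt_self_of_lt_one₀ (div_pos ((hf0 u).lt_of_ne' hu) hM) hlt (Nat.one_lt_two_pow hK.ne')
  linarith

theorem eq_of_ne_zero_of_mul_le_sq (hG : (Nat.card G).Coprime 2) (hf0 : ∀ x, 0 ≤ f x)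
    (hf : ∀ m h, f (m - h) * f (m + h) ≤ f m ^ 2) {x y : G} (hx : f x ≠ 0) (hy : f y ≠ 0) :
    f x = f y := by
  obtain ⟨t, ht⟩ := Finite.exists_max f
  rw [eq_of_forall_le_of_mul_le_sq hG hf0 hf ht hx, eq_of_forall_le_of_mul_le_sq hG hf0 hf ht hy]

end MidpointLogConcave

section Wigner

variable {d : ℕ} [NeZero d]

lemma chi_eq_stdAddChar (t : ZMod d) : chi d t = ZMod.stdAddChar t := by
  rw [ZMod.stdAddChar_apply, ZMod.toCircle_apply]; rfl

lemma chi_add (s t : ZMod d) : chi d (s + t) = chi d s * chi d t := by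
  simp only [chi_eq_stdAddChar, AddChar.map_add_eq_mul]

lemma norm_chi (t : ZMod d) : ‖chi d t‖ = 1 := by
  rw [chi_eq_stdAddChar, ZMod.stdAddChar_apply, Circle.norm_coe]

lemma sum_chi_dotProduct {ι : Type*} [Fintype ι] [DecidableEq ι] (a : ι → ZMod d) :
    ∑ p : ι → ZMod d, chi d (a ⬝ᵥ p) = if a = 0 then (d : ℂ) ^ Fintype.card ι else 0 := by
  let φ : AddChar (ι → ZMod d) ℂ :=
    ZMod.stdAddChar.compAddMonoidHom (AddMonoidHom.mk' (a ⬝ᵥ ·) (dotProduct_add a))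
  have hφ : ∀ p, φ p = chi d (a ⬝ᵥ p) := fun p => (chi_eq_stdAddChar _).symm
  obtain rfl | ha := eq_or_ne a 0
  · simp [chi_eq_stdAddChar, Fintype.card_pi, ZMod.card]
  · rw [if_neg ha, ← Finset.sum_congr rfl fun p _ => hφ p, AddChar.sum_eq_zero_iff_ne_zero]
    obtain ⟨i, hi⟩ := Function.ne_iff.1 ha
    refine AddChar.ne_zero_iff.2 ⟨Pi.single i 1, ?_⟩
    rw [hφ, dotProduct_single, mul_one, chi_eq_stdAddChar,
      ← AddChar.map_zero_eq_one (ZMod.stdAddChar (N := d)), ZMod.injective_stdAddChar.ne_iff]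
    exact hi

variable {n : ℕ}

lemma sum_chi_mul_wignerPure (ψ : (Fin n → ZMod d) → ℂ) (a q : Fin n → ZMod d) :
    ∑ p, chi d (a ⬝ᵥ p) * wignerPure d n ψ p q
      = starRingEnd ℂ (ψ (q - (2⁻¹ : ZMod d) • a)) * ψ (q + (2⁻¹ : ZMod d) • a) := by
  set F : (Fin n → ZMod d) → ℂ :=
    fun ξ => starRingEnd ℂ (ψ (q - (2⁻¹ : ZMod d) • ξ)) * ψ (q + (2⁻¹ : ZMod d) • ξ)
  have horth : ∀ ξ : Fin n → ZMod d, ∑ p, chi d (a ⬝ᵥ p) * chi d (-(ξ ⬝ᵥ p))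
      = if ξ = a then (d : ℂ) ^ n else 0 := fun ξ => by
    simp_rw [← chi_add, ← sub_eq_add_neg, ← sub_dotProduct, sum_chi_dotProduct, sub_eq_zero,
      Fintype.card_fin, eq_comm]
  have hd : (d : ℂ) ^ n ≠ 0 := pow_ne_zero _ (NeZero.ne _)
  calc ∑ p, chi d (a ⬝ᵥ p) * wignerPure d n ψ p q
      = ((d : ℂ) ^ n)⁻¹ * ∑ ξ, (∑ p, chi d (a ⬝ᵥ p) * chi d (-(ξ ⬝ᵥ p))) * F ξ := by
        simp only [wignerPure, dotProduct, F, Finset.mul_sum, Finset.sum_mul]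
        rw [Finset.sum_comm]
        exact Finset.sum_congr rfl fun ξ _ => Finset.sum_congr rfl fun p _ => by ring
    _ = F a := by
        simp_rw [horth, ite_mul, zero_mul, Finset.sum_ite_eq', Finset.mem_univ, if_true,
          inv_mul_cancel_left₀ hd]

lemma sum_wignerPure (ψ : (Fin n → ZMod d) → ℂ) (q : Fin n → ZMod d) :
    ∑ p, wignerPure d n ψ p q = Complex.normSq (ψ q) := by
  simpa [chi_eq_stdAddChar, mul_comm, Complex.mul_conj] using sum_chi_mul_wignerPure ψ 0 q

lemma norm_mul_norm_le_sq_of_wignerPure_nonneg (hd : Odd d) {ψ : (Fin n → ZMod d) → ℂ}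
    (hpos : ∀ p q, 0 ≤ wignerPure d n ψ p q) (m h : Fin n → ZMod d) :
    ‖ψ (m - h)‖ * ‖ψ (m + h)‖ ≤ ‖ψ m‖ ^ 2 := by
  have htwo : (2 : ZMod d) * 2⁻¹ = 1 := by
    simpa using ZMod.coe_mul_inv_eq_one 2 (Nat.coprime_two_left.mpr hd)
  have hhalf : (2⁻¹ : ZMod d) • (2 : ZMod d) • h = h := by
    rw [smul_smul, mul_comm, htwo, one_smul]
  have hsum : ∑ p, ‖wignerPure d n ψ p m‖ = ‖ψ m‖ ^ 2 := by
    have : ((∑ p, ‖wignerPure d n ψ p m‖ : ℝ) : ℂ) = ((‖ψ m‖ ^ 2 : ℝ) : ℂ) := by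
      simp_rw [Complex.ofReal_sum, Complex.norm_of_nonneg' (hpos _ m), sum_wignerPure,
        Complex.normSq_eq_norm_sq]
    exact_mod_cast this
  calc ‖ψ (m - h)‖ * ‖ψ (m + h)‖
      = ‖∑ p, chi d (((2 : ZMod d) • h) ⬝ᵥ p) * wignerPure d n ψ p m‖ := by
        rw [sum_chi_mul_wignerPure, hhalf, norm_mul, Complex.norm_conj]
    _ ≤ ∑ p, ‖chi d (((2 : ZMod d) • h) ⬝ᵥ p) * wignerPure d n ψ p m‖ := norm_sum_le _ _
    _ = ‖ψ m‖ ^ 2 := by simp_rw [norm_mul, norm_chi, one_mul, hsum]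

end Wigner

theorem constant_modulus_on_support_general (d n : ℕ) [NeZero d] (hd : Odd d)
    (ψ : (Fin n → ZMod d) → ℂ)
    (hpos : ∀ p q : Fin n → ZMod d, 0 ≤ wignerPure d n ψ p q)
    (x q : Fin n → ZMod d) (hx : ψ x ≠ 0) (hq : ψ q ≠ 0) :
    ‖ψ x‖ = ‖ψ q‖ := by
  have hcard : (Nat.card (Fin n → ZMod d)).Coprime 2 := by
    rw [Nat.card_fun, Nat.card_zmod, Nat.card_fin]
    exact (Nat.coprime_two_right.2 hd).pow_left n
  exact eq_of_ne_zero_of_mul_le_sq hcard (fun _ => norm_nonneg _)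
    (norm_mul_norm_le_sq_of_wignerPure_nonneg hd hpos) (norm_ne_zero_iff.2 hx)
    (norm_ne_zero_iff.2 hq)

/-- A state with nonnegative Wigner function has constant modulus on its
support. -/
theorem constant_modulus_on_support (d n : ℕ) [NeZero d] (hd : Odd d)
    (ψ : (Fin n → ZMod d) → ℂ)
    (hψ : ∑ x : Fin n → ZMod d, Complex.normSq (ψ x) = 1)
    (hpos : ∀ p q : Fin n → ZMod d, 0 ≤ wignerPure d n ψ p q)
    (x q : Fin n → ZMod d) (hx : ψ x ≠ 0) (hq : ψ q ≠ 0) :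
    ‖ψ x‖ = ‖ψ q‖ :=
  constant_modulus_on_support_general d n hd ψ hpos x q hx hq
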